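/- arXiv:1905.13191 — 4 statements merged into one kernel-verified Lean document; each statement's English description precedes it below -/
import Mathlib

section
/- Suppose demand is symmetric, θ_i = θ > 0 for all i ∈ L, and 0 < I < W. Then every optimal tuple (p, f, x, y) for the platform's problem satisfies f_{ii}^τ + y_{ii}^τ ≤ f_{ττ}^τ + y_{ττ}^τ for all i, τ ∈ L. -/
/-!
Suppose type-`τ` drivers run the loop `i → i` (`i ≠ τ`) more than the loop `τ → τ`. Moving part of
that circulation to `τ` keeps the total driver mass and, if the ride revenue does not drop, raises
revenue by `I` per unit brought home. Idle loops at `i` can be moved directly. Rides on the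
`i`-loop can be traded with other types serving the `τ`-loop. If there are none, type `τ` serves
all `τ`-loop riders, and since both loops face the same demand `c = θ α` this forces
`p i i < p τ τ`; moving both prices by `ε` toward each other shifts `c ε` riders from the
`i`-loop to the `τ`-loop without lowering the ride revenue `∑ c (1 - p) p`. Either way the tuple
was not optimal.
-/

open Finset

/-- Feasibility of a tuple `(p, f, x, y)` for the platform's problem:
prices in `[0,1]`, nonnegativity, flow balance, full dispatch,
market clearing, and the supply constraint. -/
def Feasible {L : Type*} [Fintype L] (θ : L → ℝ) (α : L → L → ℝ) (s : L → ℝ)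
    (p : L → L → ℝ) (f : L → L → L → ℝ) (x : L → L → ℝ) (y : L → L → L → ℝ) : Prop :=
  (∀ i j, 0 ≤ p i j ∧ p i j ≤ 1) ∧
  (∀ i j τ, 0 ≤ f i j τ) ∧ (∀ i j τ, 0 ≤ y i j τ) ∧ (∀ i τ, 0 ≤ x i τ) ∧
  (∀ i τ, x i τ = ∑ j, (f j i τ + y j i τ)) ∧
  (∀ i τ, (∑ j, (f i j τ + y i j τ)) = x i τ) ∧
  (∀ i j, (∑ τ, f i j τ) = θ i * α i j * (1 - p i j)) ∧
  (∀ τ, (∑ i, x i τ) ≤ s τ)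

/-- The platform's revenue objective. -/
noncomputable def Revenue {L : Type*} [Fintype L] (W I : ℝ)
    (p : L → L → ℝ) (f : L → L → L → ℝ) (x : L → L → ℝ) : ℝ :=
  (∑ i, ∑ j, ∑ τ, f i j τ * p i j) - W * (∑ i, ∑ τ, x i τ) + I * (∑ τ, x τ τ)

section Shifts

variable {L : Type*} [DecidableEq L]

def single₂ (a b : L) : L → L → ℝ := fun i j => if i = a ∧ j = b then 1 else 0

def selfLoop (a c : L) : L → L → L → ℝ := fun i j τ => if i = a ∧ j = a ∧ τ = c then 1 else 0

def shiftLoop (a b c : L) (δ : ℝ) : L → L → L → ℝ := δ • (selfLoop b c - selfLoop a c)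

def shiftMass (a b c : L) (δ : ℝ) : L → L → ℝ := δ • (single₂ b c - single₂ a c)

lemma shiftLoop_apply_of_ne {a b c τ : L} (h : τ ≠ c) (i j : L) (δ : ℝ) :
    shiftLoop a b c δ i j τ = 0 := by
  simp [shiftLoop, selfLoop, h]

lemma shiftMass_apply_of_ne {a b c τ : L} (h : τ ≠ c) (i : L) (δ : ℝ) :
    shiftMass a b c δ i τ = 0 := by
  simp [shiftMass, single₂, h]

lemma nonneg_add_shiftLoop {g : L → L → L → ℝ} (hg : 0 ≤ g) {a b c : L} {δ : ℝ} (hδ : 0 ≤ δ)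
    (hδg : δ ≤ g a a c) : 0 ≤ g + shiftLoop a b c δ := by
  intro i j τ
  have := hg i j τ
  simp only [Pi.add_apply, shiftLoop, Pi.smul_apply, Pi.sub_apply, smul_eq_mul, selfLoop,
    Pi.zero_apply] at this ⊢
  split_ifs with h₁ h₂ h₂
  · linarith
  · linarith
  · obtain ⟨rfl, rfl, rfl⟩ := h₂; linarith
  · linarith

lemma nonneg_add_shiftMass {x : L → L → ℝ} (hx : 0 ≤ x) {a b c : L} {δ : ℝ} (hδ : 0 ≤ δ)
    (hδx : δ ≤ x a c) : 0 ≤ x + shiftMass a b c δ := by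
  intro i τ
  have := hx i τ
  simp only [Pi.add_apply, shiftMass, Pi.smul_apply, Pi.sub_apply, smul_eq_mul, single₂,
    Pi.zero_apply] at this ⊢
  split_ifs with h₁ h₂ h₂
  · linarith
  · linarith
  · obtain ⟨rfl, rfl⟩ := h₂; linarith
  · linarith

end Shifts

section Circulation

variable {L : Type*} [Fintype L]

def IsCirculation (g : L → L → L → ℝ) (x : L → L → ℝ) : Prop :=
  ∀ i τ, x i τ = ∑ j, g j i τ ∧ ∑ j, g i j τ = x i τ

lemma IsCirculation.add {g g' : L → L → L → ℝ} {x x' : L → L → ℝ}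
    (h : IsCirculation g x) (h' : IsCirculation g' x') : IsCirculation (g + g') (x + x') := by
  intro i τ
  obtain ⟨hin, hout⟩ := h i τ
  obtain ⟨hin', hout'⟩ := h' i τ
  simp only [Pi.add_apply, sum_add_distrib]
  exact ⟨by rw [hin, hin'], by rw [hout, hout']⟩

lemma IsCirculation.smul {g : L → L → L → ℝ} {x : L → L → ℝ} (h : IsCirculation g x) (δ : ℝ) :
    IsCirculation (δ • g) (δ • x) := by
  intro i τ
  obtain ⟨hin, hout⟩ := h i τ
  simp only [Pi.smul_apply, smul_eq_mul, ← mul_sum]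
  exact ⟨by rw [hin], by rw [hout]⟩

lemma IsCirculation.sub {g g' : L → L → L → ℝ} {x x' : L → L → ℝ}
    (h : IsCirculation g x) (h' : IsCirculation g' x') : IsCirculation (g - g') (x - x') := by
  simpa only [sub_eq_add_neg, neg_one_smul] using h.add (h'.smul (-1))

variable [DecidableEq L]

lemma sum_single₂_left (a c τ : L) : ∑ i, single₂ a c i τ = if τ = c then 1 else 0 := by
  simp [single₂, ite_and]

lemma sum_single₂_diag (a c : L) : ∑ τ, single₂ a c τ τ = if a = c then 1 else 0 := by
  simp [single₂, ite_and]

lemma sum_sum_single₂ (a b : L) : ∑ i, ∑ j, single₂ a b i j = 1 := by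
  simp [single₂, ite_and]

lemma sum_selfLoop_type (a c i j : L) : ∑ τ, selfLoop a c i j τ = single₂ a a i j := by
  simp [selfLoop, single₂, ite_and]

lemma isCirculation_selfLoop (a c : L) : IsCirculation (selfLoop a c) (single₂ a c) := by
  intro i τ
  constructor <;> simp [selfLoop, single₂, ite_and]

lemma isCirculation_shiftLoop (a b c : L) (δ : ℝ) :
    IsCirculation (shiftLoop a b c δ) (shiftMass a b c δ) :=
  ((isCirculation_selfLoop b c).sub (isCirculation_selfLoop a c)).smul δ

lemma sum_shiftLoop_type (a b c i j : L) (δ : ℝ) :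
    ∑ τ, shiftLoop a b c δ i j τ = δ * (single₂ b b i j - single₂ a a i j) := by
  simp only [shiftLoop, Pi.smul_apply, Pi.sub_apply, smul_eq_mul, ← mul_sum, sum_sub_distrib,
    sum_selfLoop_type]

lemma sum_shiftMass_left (a b c : L) (δ : ℝ) (τ : L) : ∑ i, shiftMass a b c δ i τ = 0 := by
  simp only [shiftMass, Pi.smul_apply, Pi.sub_apply, smul_eq_mul, ← mul_sum, sum_sub_distrib,
    sum_single₂_left, sub_self, mul_zero]

lemma sum_shiftMass_diag (a b c : L) (δ : ℝ) :
    ∑ τ, shiftMass a b c δ τ τ = δ * ((if b = c then 1 else 0) - if a = c then 1 else 0) := by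
  simp only [shiftMass, Pi.smul_apply, Pi.sub_apply, smul_eq_mul, ← mul_sum, sum_sub_distrib,
    sum_single₂_diag]

end Circulation

section Platform

variable {L : Type*} [Fintype L] {θ : L → ℝ} {α : L → L → ℝ} {s : L → ℝ} {W I : ℝ}
  {p p' : L → L → ℝ} {f : L → L → L → ℝ} {x : L → L → ℝ} {y : L → L → L → ℝ}

noncomputable def rideRevenue (θ : L → ℝ) (α : L → L → ℝ) (p : L → L → ℝ) : ℝ :=
  ∑ i, ∑ j, θ i * α i j * (1 - p i j) * p i j

def Improvable (θ : L → ℝ) (α : L → L → ℝ) (s : L → ℝ) (W I : ℝ)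
    (p : L → L → ℝ) (f : L → L → L → ℝ) (x : L → L → ℝ) : Prop :=
  ∃ p' f' x' y', Feasible θ α s p' f' x' y' ∧ Revenue W I p f x < Revenue W I p' f' x'

namespace Feasible

lemma prices (h : Feasible θ α s p f x y) (i j : L) : 0 ≤ p i j ∧ p i j ≤ 1 := h.1 i j

lemma rides_nonneg (h : Feasible θ α s p f x y) : 0 ≤ f := h.2.1

lemma idle_nonneg (h : Feasible θ α s p f x y) : 0 ≤ y := h.2.2.1

lemma mass_nonneg (h : Feasible θ α s p f x y) : 0 ≤ x := h.2.2.2.1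

lemma clearing (h : Feasible θ α s p f x y) (i j : L) :
    ∑ τ, f i j τ = θ i * α i j * (1 - p i j) :=
  h.2.2.2.2.2.2.1 i j

lemma ride_le_demand (h : Feasible θ α s p f x y) (i j τ : L) :
    f i j τ ≤ θ i * α i j * (1 - p i j) := by
  rw [← h.clearing]
  exact single_le_sum (fun c _ => h.rides_nonneg i j c) (mem_univ τ)

lemma loop_le_mass (h : Feasible θ α s p f x y) (a c : L) : f a a c + y a a c ≤ x a c := by
  rw [h.2.2.2.2.1 a c]
  exact single_le_sum (f := fun j => f j a c + y j a c)
    (fun j _ => add_nonneg (h.rides_nonneg j a c) (h.idle_nonneg j a c)) (mem_univ a)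

lemma revenue_eq (h : Feasible θ α s p f x y) (W I : ℝ) :
    Revenue W I p f x = rideRevenue θ α p - W * ∑ i, ∑ τ, x i τ + I * ∑ τ, x τ τ := by
  simp only [Revenue, rideRevenue, ← sum_mul, h.clearing]

lemma add (h : Feasible θ α s p f x y) {Δf Δy : L → L → L → ℝ} {Δx : L → L → ℝ}
    (hp' : ∀ i j, 0 ≤ p' i j ∧ p' i j ≤ 1) (hf : 0 ≤ f + Δf) (hy : 0 ≤ y + Δy)
    (hx : 0 ≤ x + Δx) (hΔ : IsCirculation (Δf + Δy) Δx)
    (hclear : ∀ i j, ∑ τ, (f + Δf) i j τ = θ i * α i j * (1 - p' i j))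
    (hsupply : ∀ τ, ∑ i, Δx i τ = 0) :
    Feasible θ α s p' (f + Δf) (x + Δx) (y + Δy) := by
  obtain ⟨-, -, -, -, hin, hout, -, hs⟩ := h
  simp only [sum_add_distrib] at hin hout
  refine ⟨hp', fun i j τ => hf i j τ, fun i j τ => hy i j τ, fun i τ => hx i τ,
    fun i τ => ?_, fun i τ => ?_, hclear, fun τ => ?_⟩
  · have := (hΔ i τ).1
    simp only [Pi.add_apply, add_add_add_comm, sum_add_distrib] at this ⊢
    linarith [hin i τ]
  · have := (hΔ i τ).2
    simp only [Pi.add_apply, add_add_add_comm, sum_add_distrib] at this ⊢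
    linarith [hout i τ]
  · simp only [Pi.add_apply, sum_add_distrib, hsupply, add_zero]
    exact hs τ

lemma improvable_of_add (h : Feasible θ α s p f x y) {Δf : L → L → L → ℝ} {Δx : L → L → ℝ}
    {y' : L → L → L → ℝ} (h' : Feasible θ α s p' (f + Δf) (x + Δx) y')
    (hsupply : ∀ τ, ∑ i, Δx i τ = 0) (hride : rideRevenue θ α p ≤ rideRevenue θ α p')
    (hhome : 0 < ∑ τ, Δx τ τ) (hI : 0 < I) : Improvable θ α s W I p f x := by
  refine ⟨p', f + Δf, x + Δx, y', h', ?_⟩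
  have hmass : ∑ i, ∑ τ, Δx i τ = 0 := by
    rw [sum_comm]
    exact sum_eq_zero fun τ _ => hsupply τ
  rw [h.revenue_eq, h'.revenue_eq]
  simp only [Pi.add_apply, sum_add_distrib, hmass]
  nlinarith [mul_pos hI hhome]

end Feasible
end Platform

section Improvements

variable {L : Type*} [Fintype L] [DecidableEq L] {θ : L → ℝ} {α : L → L → ℝ} {s : L → ℝ}
  {W I : ℝ} {p : L → L → ℝ} {f : L → L → L → ℝ} {x : L → L → ℝ} {y : L → L → L → ℝ}

namespace Feasible

lemma improvable_of_idle_loop (h : Feasible θ α s p f x y) {i τ : L} (hiτ : i ≠ τ)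
    (hy : 0 < y i i τ) (hI : 0 < I) : Improvable θ α s W I p f x := by
  have hyx : y i i τ ≤ x i τ :=
    (le_add_of_nonneg_left (h.rides_nonneg i i τ)).trans (h.loop_le_mass i τ)
  have h' : Feasible θ α s p (f + 0) (x + shiftMass i τ τ (y i i τ))
      (y + shiftLoop i τ τ (y i i τ)) :=
    h.add h.prices (by simpa using h.rides_nonneg) (nonneg_add_shiftLoop h.idle_nonneg hy.le le_rfl)
      (nonneg_add_shiftMass h.mass_nonneg hy.le hyx)
      (by simpa using isCirculation_shiftLoop i τ τ (y i i τ)) (by simpa using h.clearing)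
      (sum_shiftMass_left i τ τ _)
  refine h.improvable_of_add h' (sum_shiftMass_left i τ τ _) le_rfl ?_ hI
  simpa [sum_shiftMass_diag, hiτ] using hy

/-- Type `τ` takes over the type-`τ'` rides on the loop at `τ` and type `τ'` those of type `τ`
on the loop at `i`: the same rides are served, but more type-`τ` drivers work at home. -/
lemma improvable_of_swap (h : Feasible θ α s p f x y) {i τ τ' : L} (hiτ : i ≠ τ) (hτ' : τ' ≠ τ)
    (hi : 0 < f i i τ) (hτ : 0 < f τ τ τ') (hI : 0 < I) : Improvable θ α s W I p f x := by
  set δ := min (f i i τ) (f τ τ τ')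
  have hδ : 0 < δ := lt_min hi hτ
  have hδi : δ ≤ f i i τ := min_le_left _ _
  have hδτ : δ ≤ f τ τ τ' := min_le_right _ _
  set Δf := shiftLoop i τ τ δ + shiftLoop τ i τ' δ
  set Δx := shiftMass i τ τ δ + shiftMass τ i τ' δ
  have hsupply (c : L) : ∑ a, Δx a c = 0 := by
    simp only [Δx, Pi.add_apply, sum_add_distrib, sum_shiftMass_left, add_zero]
  have hf : 0 ≤ f + Δf := by
    rw [← add_assoc]
    refine nonneg_add_shiftLoop (nonneg_add_shiftLoop h.rides_nonneg hδ.le hδi) hδ.le ?_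
    simpa [shiftLoop_apply_of_ne hτ'] using hδτ
  have hx : 0 ≤ x + Δx := by
    rw [← add_assoc]
    refine nonneg_add_shiftMass (nonneg_add_shiftMass h.mass_nonneg hδ.le ?_) hδ.le ?_
    · exact hδi.trans ((le_add_of_nonneg_right (h.idle_nonneg i i τ)).trans (h.loop_le_mass i τ))
    · simpa [shiftMass_apply_of_ne hτ'] using
        hδτ.trans ((le_add_of_nonneg_right (h.idle_nonneg τ τ τ')).trans (h.loop_le_mass τ τ'))
  have hclear (a b : L) : ∑ c, (f + Δf) a b c = θ a * α a b * (1 - p a b) := by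
    simp only [Δf, Pi.add_apply, sum_add_distrib, sum_shiftLoop_type, h.clearing]
    ring
  have h' : Feasible θ α s p (f + Δf) (x + Δx) (y + 0) :=
    h.add h.prices hf (by simpa using h.idle_nonneg) hx
      (by simpa using (isCirculation_shiftLoop i τ τ δ).add (isCirculation_shiftLoop τ i τ' δ))
      hclear hsupply
  refine h.improvable_of_add h' hsupply le_rfl ?_ hI
  have hτ'i : (0 : ℝ) ≤ if i = τ' then 1 else 0 := by split_ifs <;> norm_num
  simp only [Δx, Pi.add_apply, sum_add_distrib, sum_shiftMass_diag, if_neg hiτ,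
    if_neg hτ'.symm, if_true, sub_zero, mul_one]
  nlinarith

/-- Raising the price of the `i`-loop by `ε` and lowering that of the `τ`-loop by `ε` frees
`c ε` type-`τ` drivers at `i` and needs `c ε` more at `τ`; for `ε ≤ p τ τ - p i i` this loses no
ride revenue, since `q ↦ (1 - q) q` gains at least as much at `p i i` as it loses at `p τ τ`. -/
lemma improvable_of_price_gap (h : Feasible θ α s p f x y) {i τ : L} (hiτ : i ≠ τ)
    (hc : θ i * α i i = θ τ * α τ τ) (hc0 : 0 < θ τ * α τ τ) (hi : 0 < f i i τ)
    (hp : p i i < p τ τ) (hI : 0 < I) : Improvable θ α s W I p f x := by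
  set c := θ τ * α τ τ
  set ε := min (p τ τ - p i i) (f i i τ / c)
  have hε : 0 < ε := lt_min (sub_pos.2 hp) (div_pos hi hc0)
  have hεp : ε ≤ p τ τ - p i i := min_le_left _ _
  have hδ : c * ε ≤ f i i τ := (le_div_iff₀' hc0).1 (min_le_right _ _)
  set p' := p + ε • (single₂ i i - single₂ τ τ)
  have hcases (a b : L) : (a = i ∧ b = i) ∨ (a = τ ∧ b = τ) ∨
      (single₂ i i a b = 0 ∧ single₂ τ τ a b = 0) := by
    by_cases h₁ : a = i ∧ b = i
    · exact .inl h₁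
    by_cases h₂ : a = τ ∧ b = τ
    · exact .inr (.inl h₂)
    exact .inr (.inr ⟨if_neg h₁, if_neg h₂⟩)
  have hprices (a b : L) : 0 ≤ p' a b ∧ p' a b ≤ 1 := by
    have := h.prices i i
    have := h.prices τ τ
    rcases hcases a b with ⟨rfl, rfl⟩ | ⟨rfl, rfl⟩ | ⟨h₁, h₂⟩
    · simp only [p', single₂, hiτ, Pi.add_apply, Pi.smul_apply, Pi.sub_apply, smul_eq_mul,
        and_self, if_true, if_false]
      constructor <;> linarith
    · simp only [p', single₂, hiτ.symm, Pi.add_apply, Pi.smul_apply, Pi.sub_apply, smul_eq_mul,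
        and_self, if_true, if_false]
      constructor <;> linarith
    · simpa [p', h₁, h₂] using h.prices a b
  have hδ0 : 0 ≤ c * ε := by positivity
  have hclear (a b : L) : ∑ t, (f + shiftLoop i τ τ (c * ε)) a b t =
      θ a * α a b * (1 - p' a b) := by
    simp only [Pi.add_apply, sum_add_distrib, sum_shiftLoop_type, h.clearing]
    rcases hcases a b with ⟨rfl, rfl⟩ | ⟨rfl, rfl⟩ | ⟨h₁, h₂⟩
    · simp [p', single₂, hiτ, hc]; ring
    · simp [p', single₂, hiτ.symm]; ring
    · simp [p', h₁, h₂]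
  have hride (a b : L) : θ a * α a b * (1 - p' a b) * p' a b =
      θ a * α a b * (1 - p a b) * p a b + c * ε *
        (single₂ i i a b * (1 - 2 * p i i - ε) + single₂ τ τ a b * (2 * p τ τ - 1 - ε)) := by
    rcases hcases a b with ⟨rfl, rfl⟩ | ⟨rfl, rfl⟩ | ⟨h₁, h₂⟩
    · simp [p', single₂, hiτ, hc]; ring
    · simp [p', single₂, hiτ.symm]; ring
    · simp [p', h₁, h₂]
  have h' : Feasible θ α s p' (f + shiftLoop i τ τ (c * ε)) (x + shiftMass i τ τ (c * ε)) (y + 0) :=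
    h.add hprices (nonneg_add_shiftLoop h.rides_nonneg hδ0 hδ) (by simpa using h.idle_nonneg)
      (nonneg_add_shiftMass h.mass_nonneg hδ0
        (hδ.trans ((le_add_of_nonneg_right (h.idle_nonneg i i τ)).trans (h.loop_le_mass i τ))))
      (by simpa using isCirculation_shiftLoop i τ τ (c * ε)) hclear (sum_shiftMass_left i τ τ _)
  refine h.improvable_of_add h' (sum_shiftMass_left i τ τ _) ?_ ?_ hI
  · simp only [rideRevenue, hride, sum_add_distrib, ← mul_sum, ← sum_mul, sum_sum_single₂]
    nlinarith
  · simp only [sum_shiftMass_diag, if_neg hiτ, if_true, sub_zero, mul_one]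
    positivity

lemma improvable_of_loop_lt (h : Feasible θ α s p f x y) {i τ : L}
    (hc : θ i * α i i = θ τ * α τ τ) (hI : 0 < I)
    (hlt : f τ τ τ + y τ τ τ < f i i τ + y i i τ) : Improvable θ α s W I p f x := by
  have hiτ : i ≠ τ := by rintro rfl; exact lt_irrefl _ hlt
  by_cases hy : 0 < y i i τ
  · exact h.improvable_of_idle_loop hiτ hy hI
  have hy0 : y i i τ = 0 := le_antisymm (not_lt.1 hy) (h.idle_nonneg i i τ)
  have hyτ : 0 ≤ y τ τ τ := h.idle_nonneg τ τ τ
  have hfτ : 0 ≤ f τ τ τ := h.rides_nonneg τ τ τ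
  have hfi : f τ τ τ < f i i τ := by linarith
  by_cases hswap : ∃ τ', τ' ≠ τ ∧ 0 < f τ τ τ'
  · obtain ⟨τ', hτ', hτ⟩ := hswap
    exact h.improvable_of_swap hiτ hτ' (hfτ.trans_lt hfi) hτ hI
  push Not at hswap
  have hττ : f τ τ τ = θ τ * α τ τ * (1 - p τ τ) := by
    rw [← h.clearing, sum_eq_single τ
      (fun t _ ht => le_antisymm (hswap t ht) (h.rides_nonneg τ τ t)) (by simp)]
  have hii : f i i τ ≤ θ τ * α τ τ * (1 - p i i) := hc ▸ h.ride_le_demand i i τ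
  have hc0 : 0 < θ τ * α τ τ := by nlinarith [(h.prices i i).2]
  have hp : p i i < p τ τ := by nlinarith
  exact h.improvable_of_price_gap hiτ hc hc0 (hfτ.trans_lt hfi) hp hI

end Feasible
end Improvements

theorem stmt0_general {L : Type*} [Fintype L] (θfun : L → ℝ) (α : L → L → ℝ) (s : L → ℝ)
    (W I : ℝ)
    (hsym : ∀ i j k l, θfun i = θfun k ∧ α i j = α k l)
    (hIpos : 0 < I)
    (p : L → L → ℝ) (f : L → L → L → ℝ) (x : L → L → ℝ) (y : L → L → L → ℝ)
    (hfeas : Feasible θfun α s p f x y)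
    (hopt : ∀ p' f' x' y', Feasible θfun α s p' f' x' y' →
      Revenue W I p' f' x' ≤ Revenue W I p f x) :
    ∀ i τ, f i i τ + y i i τ ≤ f τ τ τ + y τ τ τ := by
  classical
  intro i τ
  by_contra! hlt
  have hc : θfun i * α i i = θfun τ * α τ τ := by rw [(hsym i i τ τ).1, (hsym i i τ τ).2]
  obtain ⟨p', f', x', y', h', hgt⟩ := hfeas.improvable_of_loop_lt (W := W) hc hIpos hlt
  exact (hopt p' f' x' y' h').not_gt hgt

/-- With symmetric demand, `θ_i = θ > 0`, and `0 < I < W`, every optimal tuple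
satisfies `f_{ii}^τ + y_{ii}^τ ≤ f_{ττ}^τ + y_{ττ}^τ` for all `i, τ`. -/
theorem stmt0 {L : Type*} [Fintype L] (θfun : L → ℝ) (α : L → L → ℝ) (s : L → ℝ)
    (W I θ : ℝ)
    (hθ : ∀ i, θfun i = θ) (hθpos : 0 < θ)
    (hα0 : ∀ i j, 0 ≤ α i j) (hα1 : ∀ i j, α i j ≤ 1) (hαsum : ∀ i, (∑ j, α i j) = 1)
    (hs : ∀ τ, 0 ≤ s τ)
    (hsym : ∀ i j k l, θfun i = θfun k ∧ α i j = α k l)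
    (hIpos : 0 < I) (hIW : I < W)
    (p : L → L → ℝ) (f : L → L → L → ℝ) (x : L → L → ℝ) (y : L → L → L → ℝ)
    (hfeas : Feasible θfun α s p f x y)
    (hopt : ∀ p' f' x' y', Feasible θfun α s p' f' x' y' →
      Revenue W I p' f' x' ≤ Revenue W I p f x) :
    ∀ i τ, f i i τ + y i i τ ≤ f τ τ τ + y τ τ τ :=
  stmt0_general θfun α s W I hsym hIpos p f x y hfeas hopt
end

section
/- Suppose demand is symmetric, θ_i = θ > 0 for all i ∈ L, and 0 ≤ I < W. If an optimal tuple for the platform's problem exists, then there exists an optimal tuple (p, f, x, y) such that p_{ij} = p_{ji}, f_{ij}^τ = f_{ji}^τ, and y_{ij}^τ = 0 for all i, j, τ ∈ L. -/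
open Finset

/-!
Symmetrize an optimal tuple: average each price with its reverse, `p̄ᵢⱼ = (pᵢⱼ + pⱼᵢ)/2`,
average each flow with its reverse, drop all empty relocations and keep at each location only
the drivers needed for the symmetrized rides. Since demand is symmetric, `p̄` clears the market
for the averaged flows, and symmetric flows leave every location with exactly as many drivers
as arrive, so no relocation is needed. Gross revenue `θα(1 - p)p` is concave in the price, so
averaging cannot lower it, and the new driver masses are pointwise below the old ones, which
with `0 ≤ I ≤ W` can only raise the revenue.
-/

section Symmetrization

variable {L : Type*}

noncomputable def symmPrice (p : L → L → ℝ) : L → L → ℝ := fun i j => (p i j + p j i) / 2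

noncomputable def symmFlow (f : L → L → L → ℝ) : L → L → L → ℝ :=
  fun i j τ => (f i j τ + f j i τ) / 2

def inflow [Fintype L] (f : L → L → L → ℝ) : L → L → ℝ := fun i τ => ∑ j, f j i τ

theorem symmPrice_comm (p : L → L → ℝ) (i j : L) : symmPrice p i j = symmPrice p j i := by
  simp only [symmPrice, add_comm]

theorem symmFlow_comm (f : L → L → L → ℝ) (i j τ : L) : symmFlow f i j τ = symmFlow f j i τ := by
  simp only [symmFlow, add_comm]

section Feasible

variable [Fintype L] {θ : L → ℝ} {α : L → L → ℝ} {s : L → ℝ}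
  {p : L → L → ℝ} {f : L → L → L → ℝ} {x : L → L → ℝ} {y : L → L → L → ℝ}

theorem Feasible.inflow_symmFlow_le (h : Feasible θ α s p f x y) (i τ : L) :
    inflow (symmFlow f) i τ ≤ x i τ := by
  obtain ⟨-, -, hy, -, hbal, hdisp, -, -⟩ := h
  have hin : ∑ j, f j i τ ≤ x i τ := by
    rw [hbal, sum_add_distrib]
    linarith [sum_nonneg fun j (_ : j ∈ univ) => hy j i τ]
  have hout : ∑ j, f i j τ ≤ x i τ := by
    rw [← hdisp, sum_add_distrib]
    linarith [sum_nonneg fun j (_ : j ∈ univ) => hy i j τ]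
  have : inflow (symmFlow f) i τ = (∑ j, f j i τ + ∑ j, f i j τ) / 2 := by
    simp only [inflow, symmFlow, ← sum_div, sum_add_distrib]
  linarith

theorem Feasible.symmetrize (h : Feasible θ α s p f x y)
    (hθα : ∀ i j, θ i * α i j = θ j * α j i) :
    Feasible θ α s (symmPrice p) (symmFlow f) (inflow (symmFlow f)) (fun _ _ _ => 0) := by
  have hx := h.inflow_symmFlow_le
  obtain ⟨hp, hf, -, -, -, -, hmc, hsup⟩ := h
  refine ⟨fun i j => ?_, fun i j τ => ?_, fun _ _ _ => le_rfl, fun i τ => ?_, fun i τ => ?_,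
    fun i τ => ?_, fun i j => ?_, fun τ => ?_⟩
  · unfold symmPrice
    constructor <;> linarith [hp i j, hp j i]
  · unfold symmFlow
    linarith [hf i j τ, hf j i τ]
  · exact sum_nonneg fun j _ => by unfold symmFlow; linarith [hf j i τ, hf i j τ]
  · simp only [inflow, add_zero]
  · simp only [inflow, add_zero, symmFlow_comm f i]
  · simp only [symmFlow, symmPrice, ← sum_div, sum_add_distrib, hmc, hθα j i]
    ring
  · exact (sum_le_sum fun i _ => hx i τ).trans (hsup τ)

theorem Feasible.sum_flow_mul_price (h : Feasible θ α s p f x y) :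
    ∑ i, ∑ j, ∑ τ, f i j τ * p i j = ∑ i, ∑ j, θ i * α i j * (1 - p i j) * p i j := by
  obtain ⟨-, -, -, -, -, -, hmc, -⟩ := h
  simp only [← sum_mul, hmc]

end Feasible

theorem sum_diag_le_sum_sum [Fintype L] {d : L → L → ℝ} (hd : ∀ i j, 0 ≤ d i j) :
    ∑ i, d i i ≤ ∑ i, ∑ j, d i j :=
  sum_le_sum fun i _ => single_le_sum (fun j _ => hd i j) (mem_univ i)

theorem sum_mul_one_sub_mul_le_symmPrice [Fintype L] {c : L → L → ℝ}
    (hc : ∀ i j, c i j = c j i) (hc0 : ∀ i j, 0 ≤ c i j) (p : L → L → ℝ) :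
    ∑ i, ∑ j, c i j * (1 - p i j) * p i j
      ≤ ∑ i, ∑ j, c i j * (1 - symmPrice p i j) * symmPrice p i j := by
  have hswap : ∑ i, ∑ j, c i j * (1 - p i j) * p i j
      = ∑ i, ∑ j, c i j * (1 - p j i) * p j i := by
    rw [sum_comm]
    exact sum_congr rfl fun i _ => sum_congr rfl fun j _ => by rw [hc]
  -- concavity of `t ↦ (1 - t) t`: the gap is `c (pᵢⱼ - pⱼᵢ)² / 2`
  have hpair : ∑ i, ∑ j, (c i j * (1 - p i j) * p i j + c i j * (1 - p j i) * p j i)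
      ≤ ∑ i, ∑ j, 2 * (c i j * (1 - symmPrice p i j) * symmPrice p i j) :=
    sum_le_sum fun i _ => sum_le_sum fun j _ => by
      unfold symmPrice
      nlinarith [mul_nonneg (hc0 i j) (sq_nonneg (p i j - p j i))]
  simp only [sum_add_distrib, ← mul_sum, ← hswap] at hpair
  linarith

theorem Revenue_le_Revenue [Fintype L] {W I : ℝ} (hI : 0 ≤ I) (hIW : I ≤ W)
    {p p' : L → L → ℝ} {f f' : L → L → L → ℝ} {x x' : L → L → ℝ}
    (hgross : ∑ i, ∑ j, ∑ τ, f i j τ * p i j ≤ ∑ i, ∑ j, ∑ τ, f' i j τ * p' i j)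
    (hx : ∀ i τ, x' i τ ≤ x i τ) :
    Revenue W I p f x ≤ Revenue W I p' f' x' := by
  have hdiag := sum_diag_le_sum_sum fun i τ => sub_nonneg.2 (hx i τ)
  have htot : 0 ≤ ∑ i, ∑ τ, (x i τ - x' i τ) :=
    sum_nonneg fun i _ => sum_nonneg fun τ _ => sub_nonneg.2 (hx i τ)
  simp only [sum_sub_distrib] at hdiag htot
  unfold Revenue
  nlinarith [mul_le_mul_of_nonneg_left hdiag hI, mul_le_mul_of_nonneg_right hIW htot]

end Symmetrization

theorem stmt1_general {L : Type*} [Fintype L] (θfun : L → ℝ) (α : L → L → ℝ) (s : L → ℝ)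
    (W I θ : ℝ)
    (hθ : ∀ i, θfun i = θ) (hθpos : 0 < θ)
    (hα0 : ∀ i j, 0 ≤ α i j)
    (hsym : ∀ i j k l, θfun i = θfun k ∧ α i j = α k l)
    (hInonneg : 0 ≤ I) (hIW : I < W)
    (hexists : ∃ p f x y, Feasible θfun α s p f x y ∧
      ∀ p' f' x' y', Feasible θfun α s p' f' x' y' →
        Revenue W I p' f' x' ≤ Revenue W I p f x) :
    ∃ p f x y, Feasible θfun α s p f x y ∧
      (∀ p' f' x' y', Feasible θfun α s p' f' x' y' →
        Revenue W I p' f' x' ≤ Revenue W I p f x) ∧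
      (∀ i j, p i j = p j i) ∧
      (∀ i j τ, f i j τ = f j i τ) ∧
      (∀ i j τ, y i j τ = 0) := by
  obtain ⟨p, f, x, y, hfeas, hopt⟩ := hexists
  have hθα : ∀ i j, θfun i * α i j = θfun j * α j i := fun i j => by
    rw [(hsym i j j i).1, (hsym i j j i).2]
  have hfeas' := hfeas.symmetrize hθα
  have hrev :
      Revenue W I p f x ≤ Revenue W I (symmPrice p) (symmFlow f) (inflow (symmFlow f)) := by
    refine Revenue_le_Revenue hInonneg hIW.le ?_ hfeas.inflow_symmFlow_le
    rw [hfeas.sum_flow_mul_price, hfeas'.sum_flow_mul_price]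
    exact sum_mul_one_sub_mul_le_symmPrice hθα
      (fun i j => (hθ i).symm ▸ mul_nonneg hθpos.le (hα0 i j)) p
  exact ⟨symmPrice p, symmFlow f, inflow (symmFlow f), fun _ _ _ => 0, hfeas',
    fun p' f' x' y' h' => (hopt p' f' x' y' h').trans hrev,
    symmPrice_comm p, symmFlow_comm f, fun _ _ _ => rfl⟩

/-- With symmetric demand, `θ_i = θ > 0`, and `0 ≤ I < W`, if an optimal tuple exists
then there exists an optimal tuple `(p, f, x, y)` with `p_{ij} = p_{ji}`,
`f_{ij}^τ = f_{ji}^τ`, and `y_{ij}^τ = 0` for all `i, j, τ`. -/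
theorem stmt1 {L : Type*} [Fintype L] (θfun : L → ℝ) (α : L → L → ℝ) (s : L → ℝ)
    (W I θ : ℝ)
    (hθ : ∀ i, θfun i = θ) (hθpos : 0 < θ)
    (hα0 : ∀ i j, 0 ≤ α i j) (hα1 : ∀ i j, α i j ≤ 1) (hαsum : ∀ i, (∑ j, α i j) = 1)
    (hs : ∀ τ, 0 ≤ s τ)
    (hsym : ∀ i j k l, θfun i = θfun k ∧ α i j = α k l)
    (hInonneg : 0 ≤ I) (hIW : I < W)
    (hexists : ∃ p f x y, Feasible θfun α s p f x y ∧
      ∀ p' f' x' y', Feasible θfun α s p' f' x' y' →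
        Revenue W I p' f' x' ≤ Revenue W I p f x) :
    ∃ p f x y, Feasible θfun α s p f x y ∧
      (∀ p' f' x' y', Feasible θfun α s p' f' x' y' →
        Revenue W I p' f' x' ≤ Revenue W I p f x) ∧
      (∀ i j, p i j = p j i) ∧
      (∀ i j τ, f i j τ = f j i τ) ∧
      (∀ i j τ, y i j τ = 0) :=
  stmt1_general θfun α s W I θ hθ hθpos hα0 hsym hInonneg hIW hexists
end

section
/- Let L be a finite set, δ ∈ (0,1), w ≥ 0, W = w(1 − δ), I ≥ 0, and k, τ ∈ L. Let Q : L × L → ℝ be row-stochastic with a stationary distribution μ satisfying the IC condition μ_τ ≥ μ_i for all i ∈ L. Define the per-period payoff r_i = W + I·1{i = k} − I·1{i = τ} (the payoff of a driver of true type k who reported type τ and always provides service under PARM's compensation scheme c_{ij}^τ = W − I·1{i = τ}). Then the unique solution π of the value recursion π_i = r_i + δ ∑_j Q_{ij} π_j satisfies ∑_i μ_i π_i ≤ w; that is, averaged over the stationary distribution, a misreporting driver who always provides service earns no more than her outside option w. -/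
/-! Averaging the value recursion against the stationary distribution gives
`(1 - δ) · ∑ μ π = ∑ μ r`, and `∑ μ r = W + I (μ_k - μ_τ) ≤ W` by the IC condition. -/

open Finset

section StationaryAverage

variable {L : Type*} [Fintype L]

theorem sum_mul_sum_eq_of_stationary {Q : L → L → ℝ} {μ : L → ℝ}
    (hstat : ∀ j, ∑ i, μ i * Q i j = μ j) (f : L → ℝ) :
    ∑ i, μ i * ∑ j, Q i j * f j = ∑ j, μ j * f j := by
  simp_rw [mul_sum, ← mul_assoc]
  rw [sum_comm]
  simp_rw [← sum_mul, hstat]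

theorem one_sub_mul_sum_mul_value_eq {Q : L → L → ℝ} {μ : L → ℝ}
    (hstat : ∀ j, ∑ i, μ i * Q i j = μ j) {δ : ℝ} {r π : L → ℝ}
    (hπ : ∀ i, π i = r i + δ * ∑ j, Q i j * π j) :
    (1 - δ) * ∑ i, μ i * π i = ∑ i, μ i * r i := by
  have hrec : ∑ i, μ i * π i = ∑ i, μ i * r i + δ * ∑ i, μ i * π i := by
    calc ∑ i, μ i * π i
        = ∑ i, μ i * r i + δ * ∑ i, μ i * ∑ j, Q i j * π j := by
          simp_rw [mul_sum, ← sum_add_distrib]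
          refine sum_congr rfl fun i _ => ?_
          rw [hπ i, mul_add, mul_sum, mul_sum]
          ring_nf
      _ = ∑ i, μ i * r i + δ * ∑ i, μ i * π i := by
          rw [sum_mul_sum_eq_of_stationary hstat]
  linarith

end StationaryAverage

theorem sum_mul_misreport_payoff_le {L : Type*} [Fintype L] [DecidableEq L]
    {μ : L → ℝ} (hμ1 : ∑ i, μ i = 1) {k τ : L} (hIC : ∀ i, μ i ≤ μ τ)
    {W I : ℝ} (hI : 0 ≤ I) :
    ∑ i, μ i * (W + (if i = k then I else 0) - (if i = τ then I else 0)) ≤ W := by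
  have hsum : ∑ i, μ i * (W + (if i = k then I else 0) - (if i = τ then I else 0))
      = W * ∑ i, μ i + I * (μ k - μ τ) := by
    simp only [mul_sub, mul_add, mul_ite, mul_zero, sum_sub_distrib, sum_add_distrib,
      sum_ite_eq', mem_univ, if_true, ← sum_mul]
    ring
  rw [hsum, hμ1]
  nlinarith [hIC k]

theorem stmt9_general {L : Type*} [Fintype L] [DecidableEq L]
    (δ w W I : ℝ) (hδ1 : δ < 1)
    (hW : W = w * (1 - δ)) (hI : 0 ≤ I)
    (k τ : L)
    (Q : L → L → ℝ)
    (μ : L → ℝ) (hμ1 : (∑ i, μ i) = 1)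
    (hstat : ∀ j, (∑ i, μ i * Q i j) = μ j)
    (hIC : ∀ i, μ i ≤ μ τ)
    (r : L → ℝ)
    (hr : ∀ i, r i = W + (if i = k then I else 0) - (if i = τ then I else 0))
    (π : L → ℝ) (hπ : ∀ i, π i = r i + δ * ∑ j, Q i j * π j) :
    (∑ i, μ i * π i) ≤ w := by
  have hmean : (1 - δ) * ∑ i, μ i * π i ≤ (1 - δ) * w := by
    rw [one_sub_mul_sum_mul_value_eq hstat hπ, funext hr, mul_comm, ← hW]
    exact sum_mul_misreport_payoff_le hμ1 hIC hI
  exact le_of_mul_le_mul_left hmean (sub_pos.mpr hδ1)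

/-- Under PARM's compensation scheme, the per-period payoff of a driver of true type
`k` who reported type `τ` and always provides service is
`r_i = W + I·1{i = k} − I·1{i = τ}`. If the dispatch chain `Q` is row-stochastic with
stationary distribution `μ` satisfying the IC condition `μ_τ ≥ μ_i` for all `i`,
then any solution `π` of the value recursion satisfies `∑_i μ_i π_i ≤ w`. -/
theorem stmt9 {L : Type*} [Fintype L] [DecidableEq L]
    (δ w W I : ℝ) (hδ0 : 0 < δ) (hδ1 : δ < 1) (hw : 0 ≤ w)
    (hW : W = w * (1 - δ)) (hI : 0 ≤ I)
    (k τ : L)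
    (Q : L → L → ℝ) (hQ0 : ∀ i j, 0 ≤ Q i j) (hQ1 : ∀ i, (∑ j, Q i j) = 1)
    (μ : L → ℝ) (hμ0 : ∀ i, 0 ≤ μ i) (hμ1 : (∑ i, μ i) = 1)
    (hstat : ∀ j, (∑ i, μ i * Q i j) = μ j)
    (hIC : ∀ i, μ i ≤ μ τ)
    (r : L → ℝ)
    (hr : ∀ i, r i = W + (if i = k then I else 0) - (if i = τ then I else 0))
    (π : L → ℝ) (hπ : ∀ i, π i = r i + δ * ∑ j, Q i j * π j) :
    (∑ i, μ i * π i) ≤ w :=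
  stmt9_general δ w W I hδ1 hW hI k τ Q μ hμ1 hstat hIC r hr π hπ
end

section
/- Let L be a finite set, δ ∈ (0,1), w, W, I ∈ ℝ, and k, τ ∈ L. Let Q : L × L → ℝ be row-stochastic (Q_{ij} ≥ 0 and ∑_j Q_{ij} = 1 for all i), and let μ : L → ℝ satisfy μ_i ≥ 0 for all i, ∑_i μ_i = 1, and μ_τ > 0. Then there exists a unique pair (π, P) with π : L → ℝ and P ∈ ℝ satisfying PARM's penalty system: π_i = W + δ ∑_j Q_{ij} π_j + I·1{i = k} for every i ≠ τ; π_τ = δw − P + I·1{τ = k}; and ∑_i μ_i π_i = w. -/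
open Finset

/-- Auxiliary linear map encoding PARM's penalty system. -/
def stmt11F {L : Type*} [Fintype L] [DecidableEq L] (δ : ℝ) (τ : L)
    (Q : L → L → ℝ) (μ : L → ℝ) : (L → ℝ) →ₗ[ℝ] (L → ℝ) where
  toFun x i := if i = τ then ∑ j, μ j * x j else x i - δ * ∑ j, Q i j * x j
  map_add' x y := by
    funext i
    by_cases h : i = τ <;>
      simp [h, mul_add, Finset.sum_add_distrib, Finset.mul_sum] <;> ring
  map_smul' c x := by
    funext i
    by_cases h : i = τ <;>
      simp [h, Finset.mul_sum, mul_comm, mul_left_comm] <;> ring_nf <;>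
      simp [Finset.mul_sum, mul_comm, mul_left_comm]

lemma stmt11F_apply {L : Type*} [Fintype L] [DecidableEq L] (δ : ℝ) (τ : L)
    (Q : L → L → ℝ) (μ : L → ℝ) (x : L → ℝ) (i : L) :
    stmt11F δ τ Q μ x i =
      if i = τ then ∑ j, μ j * x j else x i - δ * ∑ j, Q i j * x j := rfl

lemma stmt11_nonpos {L : Type*} [Fintype L] [DecidableEq L]
    (δ : ℝ) (hδ0 : 0 < δ) (hδ1 : δ < 1) (τ : L)
    (Q : L → L → ℝ) (hQ0 : ∀ i j, 0 ≤ Q i j) (hQ1 : ∀ i, (∑ j, Q i j) = 1)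
    (μ : L → ℝ) (hμ0 : ∀ i, 0 ≤ μ i) (hμτ : 0 < μ τ)
    (x : L → ℝ) (hx : ∀ i, i ≠ τ → x i = δ * ∑ j, Q i j * x j)
    (hs : (∑ i, μ i * x i) = 0) : ∀ i, x i ≤ 0 := by
  by_contra hcon
  push_neg at hcon
  obtain ⟨i1, hi1⟩ := hcon
  obtain ⟨i0, -, hi0⟩ := Finset.exists_max_image Finset.univ x ⟨τ, Finset.mem_univ τ⟩
  have hub : ∀ i, x i ≤ x i0 := fun i => hi0 i (Finset.mem_univ i)
  have hM : 0 < x i0 := lt_of_lt_of_le hi1 (hub i1)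
  have hsumle : ∀ i, (∑ j, Q i j * x j) ≤ x i0 := by
    intro i
    calc (∑ j, Q i j * x j) ≤ ∑ j, Q i j * x i0 :=
          Finset.sum_le_sum fun j _ => mul_le_mul_of_nonneg_left (hub j) (hQ0 i j)
      _ = x i0 := by rw [← Finset.sum_mul, hQ1, one_mul]
  have hτmax : x τ = x i0 := by
    by_cases h : i0 = τ
    · rw [← h]
    · exfalso
      have h1 := hx i0 h
      nlinarith [hsumle i0]
  obtain ⟨j0, -, hj0⟩ := Finset.exists_min_image Finset.univ x ⟨τ, Finset.mem_univ τ⟩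
  have hlb : ∀ i, x j0 ≤ x i := fun i => hj0 i (Finset.mem_univ i)
  have hm : 0 ≤ x j0 := by
    by_contra hneg
    push_neg at hneg
    by_cases h : j0 = τ
    · rw [h] at hneg; nlinarith
    · have h1 := hx j0 h
      have hsumge : x j0 ≤ (∑ j, Q j0 j * x j) := by
        calc x j0 = ∑ j, Q j0 j * x j0 := by rw [← Finset.sum_mul, hQ1, one_mul]
          _ ≤ ∑ j, Q j0 j * x j :=
            Finset.sum_le_sum fun j _ => mul_le_mul_of_nonneg_left (hlb j) (hQ0 j0 j)
      nlinarith
  have hpos : 0 < ∑ i, μ i * x i := by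
    have h1 : μ τ * x τ ≤ ∑ i, μ i * x i :=
      Finset.single_le_sum
        (fun i _ => mul_nonneg (hμ0 i) (hm.trans (hlb i))) (Finset.mem_univ τ)
    nlinarith
  linarith

lemma stmt11_zero {L : Type*} [Fintype L] [DecidableEq L]
    (δ : ℝ) (hδ0 : 0 < δ) (hδ1 : δ < 1) (τ : L)
    (Q : L → L → ℝ) (hQ0 : ∀ i j, 0 ≤ Q i j) (hQ1 : ∀ i, (∑ j, Q i j) = 1)
    (μ : L → ℝ) (hμ0 : ∀ i, 0 ≤ μ i) (hμτ : 0 < μ τ)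
    (x : L → ℝ) (hx : ∀ i, i ≠ τ → x i = δ * ∑ j, Q i j * x j)
    (hs : (∑ i, μ i * x i) = 0) : x = 0 := by
  have h1 := stmt11_nonpos δ hδ0 hδ1 τ Q hQ0 hQ1 μ hμ0 hμτ x hx hs
  have h2 := stmt11_nonpos δ hδ0 hδ1 τ Q hQ0 hQ1 μ hμ0 hμτ (fun i => -x i)
    (by intro i hi
        have := hx i hi
        simp only [← Finset.sum_neg_distrib, mul_neg]
        rw [show (∑ j, -(Q i j * x j)) = -∑ j, Q i j * x j by rw [Finset.sum_neg_distrib]]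
        linarith)
    (by rw [show (∑ i, μ i * -x i) = -∑ i, μ i * x i by
          rw [← Finset.sum_neg_distrib]; congr 1; funext i; ring]
        rw [hs]; ring)
  funext i
  simp only [Pi.zero_apply]
  linarith [h1 i, show -x i ≤ 0 from h2 i]

/-- PARM's penalty system: for a row-stochastic dispatch matrix `Q` and weights `μ`
with `μ_τ > 0`, there is a unique pair `(π, P)` with
`π_i = W + δ ∑_j Q_{ij} π_j + I·1{i = k}` for every `i ≠ τ`,
`π_τ = δw − P + I·1{τ = k}`, and `∑_i μ_i π_i = w`. -/
theorem stmt11 {L : Type*} [Fintype L] [DecidableEq L]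
    (δ w W I : ℝ) (hδ0 : 0 < δ) (hδ1 : δ < 1) (hW : W = w * (1 - δ))
    (k τ : L)
    (Q : L → L → ℝ) (hQ0 : ∀ i j, 0 ≤ Q i j) (hQ1 : ∀ i, (∑ j, Q i j) = 1)
    (μ : L → ℝ) (hμ0 : ∀ i, 0 ≤ μ i) (hμ1 : (∑ i, μ i) = 1) (hμτ : 0 < μ τ) :
    ∃! πP : (L → ℝ) × ℝ,
      (∀ i, i ≠ τ →
        πP.1 i = W + δ * (∑ j, Q i j * πP.1 j) + (if i = k then I else 0)) ∧
      πP.1 τ = δ * w - πP.2 + (if τ = k then I else 0) ∧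
      (∑ i, μ i * πP.1 i) = w := by
  classical
  set f := stmt11F δ τ Q μ with hfdef
  have hinj : Function.Injective f := by
    rw [injective_iff_map_eq_zero]
    intro x hx0
    refine stmt11_zero δ hδ0 hδ1 τ Q hQ0 hQ1 μ hμ0 hμτ x ?_ ?_
    · intro i hi
      have := congrFun hx0 i
      rw [stmt11F_apply] at this
      simp only [if_neg hi, Pi.zero_apply] at this
      linarith
    · have := congrFun hx0 τ
      rw [stmt11F_apply] at this
      simpa using this
  have hsurj : Function.Surjective f := LinearMap.injective_iff_surjective.mp hinj
  set b : L → ℝ := fun i => if i = τ then w else W + (if i = k then I else 0) with hbdef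
  obtain ⟨x, hxb⟩ := hsurj b
  have hxτeq : (∑ j, μ j * x j) = w := by
    have := congrFun hxb τ
    rw [stmt11F_apply] at this
    simpa [hbdef] using this
  have hxrec : ∀ i, i ≠ τ → x i = W + δ * (∑ j, Q i j * x j) + (if i = k then I else 0) := by
    intro i hi
    have := congrFun hxb i
    rw [stmt11F_apply] at this
    simp only [if_neg hi, hbdef] at this
    linarith
  refine ⟨⟨x, δ * w + (if τ = k then I else 0) - x τ⟩, ⟨hxrec, by ring, hxτeq⟩, ?_⟩
  rintro ⟨π', P'⟩ ⟨hA, hB, hC⟩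
  have hπ' : π' = x := by
    apply hinj
    rw [hxb]
    funext i
    rw [stmt11F_apply]
    by_cases h : i = τ
    · simp only [if_pos h, hbdef, h]
      simpa using hC
    · simp only [if_neg h, hbdef]
      have := hA i h
      linarith
  simp only [Prod.mk.injEq]
  refine ⟨hπ', ?_⟩
  rw [hπ'] at hB
  simp only at hB
  linarith
end
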